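/- arXiv:2007.11490 — 2 statements merged into one kernel-verified Lean document; each statement's English description precedes it below -/
import Mathlib

section
/- Let E be a small exact category and F₁ → F₂ → F₃ a short exact sequence in the functor category Mod E (additive functors E^op → Ab). If F₁ and F₃ are weakly effaceable, then F₂ is weakly effaceable. -/
open CategoryTheory CategoryTheory.Limits Opposite

universe u

/-- A functor `F : Eᵒᵖ ⥤ Ab` is weakly effaceable (with respect to the class `adm` of
admissible epimorphisms of the exact structure on `E`) if for every `X` and every
`x ∈ F(X)` there is an admissible epimorphism `f : Y ⟶ X` with `F(f)(x) = 0`. -/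
def WeaklyEffaceable {E : Type u} [SmallCategory E] [Preadditive E]
    (adm : MorphismProperty E) (F : Eᵒᵖ ⥤ AddCommGrpCat.{u}) : Prop :=
  ∀ (X : E) (x : F.obj (op X)), ∃ (Y : E) (f : Y ⟶ X), adm f ∧ F.map f.op x = 0

/-! An element of `F₂(X)` is pulled back along an admissible epimorphism into the image of `F₁`
(effaceability of `F₃` and exactness), then along a second one to zero (effaceability of `F₁`);
the composite of the two is admissible. -/

namespace WeaklyEffaceable

variable {E : Type u} [SmallCategory E] [Preadditive E] {adm : MorphismProperty E}
  {F G : Eᵒᵖ ⥤ AddCommGrpCat.{u}}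

lemma exists_app_map_eq_zero (hG : WeaklyEffaceable adm G) (τ : F ⟶ G) {X : E}
    (x : F.obj (op X)) : ∃ (Y : E) (f : Y ⟶ X), adm f ∧ τ.app (op Y) (F.map f.op x) = 0 := by
  obtain ⟨Y, f, hf, hzero⟩ := hG X (τ.app (op X) x)
  exact ⟨Y, f, hf, by rwa [NatTrans.naturality_apply]⟩

lemma exists_map_app_eq_zero (hF : WeaklyEffaceable adm F) (τ : F ⟶ G) {X : E}
    (x : F.obj (op X)) : ∃ (Y : E) (f : Y ⟶ X), adm f ∧ G.map f.op (τ.app (op X) x) = 0 := by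
  obtain ⟨Y, f, hf, hzero⟩ := hF X x
  exact ⟨Y, f, hf, by rw [← NatTrans.naturality_apply, hzero, map_zero]⟩

end WeaklyEffaceable

theorem weaklyEffaceable_of_extension_general {E : Type u} [SmallCategory E] [Preadditive E]
    (adm : MorphismProperty E) [adm.IsStableUnderComposition]
    (F₁ F₂ F₃ : Eᵒᵖ ⥤ AddCommGrpCat.{u})
    (α : F₁ ⟶ F₂) (β : F₂ ⟶ F₃)
    (hexact : ∀ X : Eᵒᵖ, Function.Exact (α.app X) (β.app X))
    (h₁ : WeaklyEffaceable adm F₁) (h₃ : WeaklyEffaceable adm F₃) :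
    WeaklyEffaceable adm F₂ := by
  intro X x
  obtain ⟨Y, f, hf, hβ⟩ := h₃.exists_app_map_eq_zero β x
  obtain ⟨y, hy⟩ := (hexact (op Y) _).mp hβ
  obtain ⟨Z, g, hg, hα⟩ := h₁.exists_map_app_eq_zero α y
  refine ⟨Z, g ≫ f, adm.comp_mem g f hg hf, ?_⟩
  rw [op_comp, F₂.map_comp, ConcreteCategory.comp_apply, ← hy, hα]

/-- Let `E` be a small exact category, with class of admissible epimorphisms `adm`, and let
`F₁ → F₂ → F₃` be a (pointwise) short exact sequence in `Mod E`, the category of additive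
functors `Eᵒᵖ ⥤ Ab`. If `F₁` and `F₃` are weakly effaceable, then so is `F₂`. -/
theorem weaklyEffaceable_of_extension {E : Type u} [SmallCategory E] [Preadditive E]
    (adm : MorphismProperty E) [adm.IsStableUnderComposition]
    (F₁ F₂ F₃ : Eᵒᵖ ⥤ AddCommGrpCat.{u})
    [F₁.Additive] [F₂.Additive] [F₃.Additive]
    (α : F₁ ⟶ F₂) (β : F₂ ⟶ F₃)
    (hinj : ∀ X : Eᵒᵖ, Function.Injective (α.app X))
    (hexact : ∀ X : Eᵒᵖ, Function.Exact (α.app X) (β.app X))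
    (hsurj : ∀ X : Eᵒᵖ, Function.Surjective (β.app X))
    (h₁ : WeaklyEffaceable adm F₁) (h₃ : WeaklyEffaceable adm F₃) :
    WeaklyEffaceable adm F₂ :=
  weaklyEffaceable_of_extension_general adm F₁ F₂ F₃ α β hexact h₁ h₃
end

section
/- Let A be an abelian category with a full subcategory M such that Ext^i_A(M, N) = 0 for all M, N in M and all 1 ≤ i ≤ n−1 (M is n-rigid). Suppose X⁰ → X¹ → ⋯ → X^{n+1} is an exact sequence in A with all terms in M. Then for every object Z of M, the induced sequence 0 → Hom(Z, X⁰) → Hom(Z, X¹) → ⋯ → Hom(Z, Xⁿ) → Hom(Z, X^{n+1}) of abelian groups is exact. -/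
/-!
Cut the sequence into the short exact sequences `0 → ker dᵢ → Xᵢ → ker dᵢ₊₁ → 0`. Starting
from `ker d₀ = 0`, their long `Ext(Z, -)` sequences and the rigidity of the `Xᵢ` shift dimension
to `Extʲ(Z, ker dᵢ) = 0` for `j ≥ 1` and `i + j ≤ n`. For `i < n` this gives
`Ext¹(Z, ker dᵢ) = 0`, so every map `Z → ker dᵢ₊₁` lifts along `Xᵢ → ker dᵢ₊₁`: this is
exactness of `Hom(Z, -)` at `Xᵢ₊₁`.
-/

open CategoryTheory CategoryTheory.Limits CategoryTheory.Abelian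

universe w v u

namespace CategoryTheory

variable {A : Type u} [Category.{v} A] [Abelian A]

namespace ShortComplex

noncomputable abbrev kernelLiftSequence (S : ShortComplex A) : ShortComplex A :=
  ShortComplex.mk (kernel.ι S.f) (kernel.lift S.g S.f S.zero) (by ext; simp)

lemma kernelLiftSequence_exact (S : ShortComplex A) : S.kernelLiftSequence.Exact :=
  exact_of_f_is_kernel _
    (isKernelOfComp (kernel.ι S.g) S.f (kernelIsKernel S.f) _ (kernel.lift_ι _ _ _))

lemma Exact.shortExact_kernelLiftSequence {S : ShortComplex A} (hS : S.Exact) :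
    S.kernelLiftSequence.ShortExact :=
  have : Epi S.kernelLiftSequence.g := hS.epi_kernelLift
  ⟨S.kernelLiftSequence_exact⟩

end ShortComplex

variable [HasExt.{w} A]

lemma Abelian.Ext.eq_zero_of_isZero_right {Z K : A} (hK : IsZero K) {j : ℕ} (e : Ext Z K j) :
    e = 0 := by
  rw [← e.comp_mk₀_id, hK.eq_of_src (𝟙 K) 0, Ext.mk₀_zero, Ext.comp_zero]

namespace ShortComplex

lemma ShortExact.ext_X₃_eq_zero {S : ShortComplex A} (hS : S.ShortExact) {Z : A} {j : ℕ}
    (h₂ : ∀ e : Ext Z S.X₂ j, e = 0) (h₁ : ∀ e : Ext Z S.X₁ (j + 1), e = 0)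
    (e : Ext Z S.X₃ j) : e = 0 := by
  obtain ⟨e₂, rfl⟩ := Ext.covariant_sequence_exact₃ Z hS e rfl (h₁ _)
  rw [h₂ e₂, Ext.zero_comp]

lemma ShortExact.exists_lift_of_ext_X₁_eq_zero {S : ShortComplex A} (hS : S.ShortExact) {Z : A}
    (h₁ : ∀ e : Ext Z S.X₁ 1, e = 0) (g : Z ⟶ S.X₃) : ∃ f : Z ⟶ S.X₂, f ≫ S.g = g := by
  obtain ⟨e, he⟩ := Ext.covariant_sequence_exact₃ Z hS (Ext.mk₀ g) rfl (h₁ _)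
  obtain ⟨f, rfl⟩ := (Ext.mk₀_bijective _ _).2 e
  exact ⟨f, (Ext.mk₀_bijective _ _).1 (by rwa [← Ext.mk₀_comp_mk₀])⟩

lemma Exact.function_exact_comp_of_ext_kernel_eq_zero {S : ShortComplex A} (hS : S.Exact)
    {Z : A} (h : ∀ e : Ext Z (kernel S.f) 1, e = 0) :
    Function.Exact (fun g : Z ⟶ S.X₁ => g ≫ S.f) (fun g : Z ⟶ S.X₂ => g ≫ S.g) := by
  intro g
  constructor
  · intro hg
    obtain ⟨f, hf⟩ := hS.shortExact_kernelLiftSequence.exists_lift_of_ext_X₁_eq_zero h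
      (kernel.lift S.g g hg)
    exact ⟨f, by simpa using hf =≫ kernel.ι S.g⟩
  · rintro ⟨f, rfl⟩
    simp

end ShortComplex

lemma ext_kernel_eq_zero_of_exact {X : ℕ → A} {d : ∀ i, X i ⟶ X (i + 1)}
    (hcomplex : ∀ i, d i ≫ d (i + 1) = 0) {n : ℕ} [Mono (d 0)]
    (hexact : ∀ i < n, (ShortComplex.mk (d i) (d (i + 1)) (hcomplex i)).Exact) {Z : A}
    (hX : ∀ i j, 1 ≤ j → i + j < n → ∀ e : Ext Z (X i) j, e = 0) :
    ∀ i j, 1 ≤ j → i + j ≤ n → ∀ e : Ext Z (kernel (d i)) j, e = 0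
  | 0, _, _, _, e => Ext.eq_zero_of_isZero_right (isZero_kernel_of_mono (d 0)) e
  | i + 1, j, hj, hij, e =>
    ((hexact i (by omega)).shortExact_kernelLiftSequence.ext_X₃_eq_zero
      (hX i j hj (by omega))
      (ext_kernel_eq_zero_of_exact hcomplex hexact hX i (j + 1) (by omega) (by omega))) e

end CategoryTheory

theorem hom_exact_of_n_rigid_general {A : Type u} [Category.{v} A] [Abelian A] [HasExt.{w} A]
    (P : A → Prop) (n : ℕ)
    (hrigid : ∀ M N : A, P M → P N → ∀ i : ℕ, 1 ≤ i → i ≤ n - 1 →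
      ∀ e : Abelian.Ext M N i, e = 0)
    (X : ℕ → A) (d : ∀ i, X i ⟶ X (i + 1))
    (hcomplex : ∀ i, d i ≫ d (i + 1) = 0)
    (hterms : ∀ i ≤ n + 1, P (X i))
    (hmono : Mono (d 0))
    (hexact : ∀ i < n, (ShortComplex.mk (d i) (d (i + 1)) (hcomplex i)).Exact) :
    ∀ Z : A, P Z →
      Function.Injective (fun g : Z ⟶ X 0 => g ≫ d 0) ∧
      ∀ i < n, Function.Exact (fun g : Z ⟶ X i => g ≫ d i)
        (fun g : Z ⟶ X (i + 1) => g ≫ d (i + 1)) := by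
  intro Z hZ
  have hker := ext_kernel_eq_zero_of_exact hcomplex hexact
    (fun i j hj hij => hrigid Z (X i) hZ (hterms i (by omega)) j hj (by omega))
  exact ⟨fun _ _ h => (cancel_mono (d 0)).1 h,
    fun i hi => (hexact i hi).function_exact_comp_of_ext_kernel_eq_zero (hker i 1 le_rfl hi)⟩

/-- Let `A` be an abelian category and `M` a full subcategory (given by a predicate `P`)
which is `n`-rigid: `Ext^i(M, N) = 0` for all `M, N ∈ M` and all `1 ≤ i ≤ n − 1`. If
`X⁰ → X¹ → ⋯ → X^{n+1}` is an exact sequence in `A` with all terms in `M`, then for every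
`Z ∈ M` the induced sequence
`0 → Hom(Z, X⁰) → Hom(Z, X¹) → ⋯ → Hom(Z, Xⁿ) → Hom(Z, X^{n+1})` of abelian groups is
exact. -/
theorem hom_exact_of_n_rigid {A : Type u} [Category.{v} A] [Abelian A] [HasExt.{w} A]
    (P : A → Prop) (n : ℕ)
    (hrigid : ∀ M N : A, P M → P N → ∀ i : ℕ, 1 ≤ i → i ≤ n - 1 →
      ∀ e : Abelian.Ext M N i, e = 0)
    (X : ℕ → A) (d : ∀ i, X i ⟶ X (i + 1))
    (hcomplex : ∀ i, d i ≫ d (i + 1) = 0)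
    (hterms : ∀ i ≤ n + 1, P (X i))
    (hmono : Mono (d 0)) (hepi : Epi (d n))
    (hexact : ∀ i < n, (ShortComplex.mk (d i) (d (i + 1)) (hcomplex i)).Exact) :
    ∀ Z : A, P Z →
      Function.Injective (fun g : Z ⟶ X 0 => g ≫ d 0) ∧
      ∀ i < n, Function.Exact (fun g : Z ⟶ X i => g ≫ d i)
        (fun g : Z ⟶ X (i + 1) => g ≫ d (i + 1)) :=
  hom_exact_of_n_rigid_general P n hrigid X d hcomplex hterms hmono hexact
end
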